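/- Let A = C^∞(M₃) where M₃ = H₃(ℤ)\H₃(ℝ) is the Heisenberg nilmanifold, realized as {f ∈ C^∞(ℝ×𝕋²) : f(x+1, y, t+y) = f(x,y,t)}. Define U(x,y,t) = e^{2πiy} and V(x,y,t) = e^{2πix}, and the twisted product with p = (2π)^{-1/2}∂_x, q = -i(2π)^{-1/2}(∂_y + x∂_t): a∗_θ b = Σ_{k≥0}(−θ)^k/k!(p^k a)(q^k b). Then U ∗_θ V = e^{2πiθ} V ∗_θ U as formal power series in θ. -/

import Mathlib

/-!
`U` and `V` are joint eigenfunctions of the two vector fields: `p U = 0`, `q V = 0`,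
`p V = √(2π) i V` and `q U = √(2π) U`. For `p f = a f`, `q g = b g` the twisted product
collapses to `f ∗_θ g = exp(-a b θ) f g`, so `U ∗_θ V = U V` and `V ∗_θ U = e^{-2πiθ} V U`.
The theorem is then `e^{2πiθ} e^{-2πiθ} = 1`, which follows by substituting `θ` into the
identity `e^{aX} e^{bX} = e^{(a+b)X}` of formal power series.
-/

/-- Functions on `ℝ×𝕋²` (periodicity imposed separately). -/
abbrev Fn3 : Type := ℝ × ℝ × ℝ → ℂ

/-- The vector field `p = (2π)^{-1/2} ∂_x` on the Heisenberg manifold. -/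
noncomputable def pOp (f : Fn3) : Fn3 := fun v =>
  ((Real.sqrt (2 * Real.pi) : ℝ) : ℂ)⁻¹ * deriv (fun s => f (s, v.2.1, v.2.2)) v.1

/-- The vector field `q = -i(2π)^{-1/2}(∂_y + x ∂_t)` on the Heisenberg manifold. -/
noncomputable def qOp (f : Fn3) : Fn3 := fun v =>
  (-Complex.I) * ((Real.sqrt (2 * Real.pi) : ℝ) : ℂ)⁻¹ *
    (deriv (fun s => f (v.1, s, v.2.2)) v.2.1 +
      (v.1 : ℂ) * deriv (fun s => f (v.1, v.2.1, s)) v.2.2)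

/-- The twisted product `a ∗_θ b = Σ_k ((−θ)^k/k!)(p^k a)(q^k b)`, as a formal power
series (in `ℏ`) of functions. -/
noncomputable def star6 (θ : PowerSeries ℂ) (f g : Fn3) : PowerSeries Fn3 :=
  PowerSeries.mk fun N => ∑ k ∈ Finset.range (N + 1),
    ((k.factorial : ℂ)⁻¹ * PowerSeries.coeff N ((-θ) ^ k)) • (pOp^[k] f * qOp^[k] g)

/-- `exp(u)` for a scalar power series `u` with zero constant term. -/
noncomputable def cexpSeries (u : PowerSeries ℂ) : PowerSeries ℂ :=
  PowerSeries.mk fun N => ∑ k ∈ Finset.range (N + 1),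
    (k.factorial : ℂ)⁻¹ * PowerSeries.coeff N (u ^ k)

/-- The generator `U(x,y,t) = e^{2πiy}`. -/
noncomputable def Ugen : Fn3 := fun v => Complex.exp (2 * Real.pi * Complex.I * v.2.1)

/-- The generator `V(x,y,t) = e^{2πix}`. -/
noncomputable def Vgen : Fn3 := fun v => Complex.exp (2 * Real.pi * Complex.I * v.1)

open PowerSeries

lemma PowerSeries.coeff_pow_eq_zero_of_lt {R : Type*} [CommSemiring R] {u : R⟦X⟧}
    (hu : constantCoeff u = 0) {N k : ℕ} (h : N < k) : coeff N (u ^ k) = 0 :=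
  X_pow_dvd_iff.mp (pow_dvd_pow_of_dvd (X_dvd_iff.mpr hu) k) N h

lemma PowerSeries.coeff_subst_eq_sum_range {R : Type*} [CommRing R] {u f : R⟦X⟧}
    (hu : constantCoeff u = 0) (N : ℕ) :
    coeff N (f.subst u) = ∑ k ∈ Finset.range (N + 1), coeff k f * coeff N (u ^ k) := by
  rw [coeff_subst' (HasSubst.of_constantCoeff_zero' hu)]
  refine finsum_eq_sum_of_support_subset _ fun k hk => ?_
  rw [Function.mem_support] at hk
  rw [Finset.coe_range, Set.mem_Iio, Nat.lt_succ_iff]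
  by_contra! hNk
  exact hk (by rw [coeff_pow_eq_zero_of_lt hu hNk, smul_zero])

lemma cexpSeries_smul_eq_subst {θ : ℂ⟦X⟧} (hθ : constantCoeff θ = 0) (a : ℂ) :
    cexpSeries (a • θ) = (rescale a (exp ℂ)).subst θ := by
  ext N
  rw [cexpSeries, coeff_mk, coeff_subst_eq_sum_range hθ]
  refine Finset.sum_congr rfl fun k _ => ?_
  rw [smul_pow, coeff_smul, coeff_rescale, coeff_exp, smul_eq_mul]
  simp only [one_div, map_inv₀, map_natCast]
  ring

lemma cexpSeries_smul_mul_cexpSeries_smul {θ : ℂ⟦X⟧} (hθ : constantCoeff θ = 0) (a b : ℂ) :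
    cexpSeries (a • θ) * cexpSeries (b • θ) = cexpSeries ((a + b) • θ) := by
  rw [cexpSeries_smul_eq_subst hθ, cexpSeries_smul_eq_subst hθ, cexpSeries_smul_eq_subst hθ,
    ← subst_mul (HasSubst.of_constantCoeff_zero' hθ), exp_mul_exp_eq_exp_add]

lemma Function.iterate_eq_pow_smul_of_eq_smul {R M : Type*} [Monoid R] [MulAction R M]
    {T : M → M} (hT : ∀ (a : R) x, T (a • x) = a • T x) {c : R} {f : M} (hf : T f = c • f)
    (k : ℕ) : T^[k] f = c ^ k • f := by
  induction k with
  | zero => simp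
  | succ k ih => rw [iterate_succ_apply', ih, hT, hf, smul_smul, pow_succ]

lemma pOp_const_smul (a : ℂ) (f : Fn3) : pOp (a • f) = a • pOp f := by
  funext v
  simp only [pOp, Pi.smul_apply, smul_eq_mul, deriv_const_mul_field']
  ring

lemma qOp_const_smul (a : ℂ) (f : Fn3) : qOp (a • f) = a • qOp f := by
  funext v
  simp only [qOp, Pi.smul_apply, smul_eq_mul, deriv_const_mul_field']
  ring

lemma star6_eq_of_eq_smul {θ : ℂ⟦X⟧} {f g : Fn3} {a b : ℂ} (hf : pOp f = a • f)
    (hg : qOp g = b • g) :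
    star6 θ f g = map (algebraMap ℂ Fn3) (cexpSeries ((-(a * b)) • θ)) * C (f * g) := by
  refine PowerSeries.ext fun N => ?_
  rw [star6, coeff_mk, coeff_mul_C, coeff_map, cexpSeries, coeff_mk, ← Algebra.smul_def,
    Finset.sum_smul]
  refine Finset.sum_congr rfl fun k _ => ?_
  rw [Function.iterate_eq_pow_smul_of_eq_smul pOp_const_smul hf,
    Function.iterate_eq_pow_smul_of_eq_smul qOp_const_smul hg, smul_mul_smul, smul_smul,
    neg_smul, ← smul_neg, smul_pow, coeff_smul, smul_eq_mul, mul_pow]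
  ring_nf

lemma hasDerivAt_cexp_const_mul_ofReal (c : ℂ) (x : ℝ) :
    HasDerivAt (fun s : ℝ => Complex.exp (c * s)) (Complex.exp (c * x) * c) x := by
  simpa using (((hasDerivAt_id (x : ℂ)).const_mul c).cexp).comp_ofReal

lemma pOp_Ugen : pOp Ugen = (0 : ℂ) • Ugen := by
  funext v
  simp [pOp, Ugen]

lemma qOp_Vgen : qOp Vgen = (0 : ℂ) • Vgen := by
  funext v
  simp [qOp, Vgen]

lemma sqrt_two_pi_inv_mul_two_pi :
    ((√(2 * Real.pi) : ℝ) : ℂ)⁻¹ * (2 * Real.pi) = √(2 * Real.pi) := by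
  have h : (√(2 * Real.pi))⁻¹ * (2 * Real.pi) = √(2 * Real.pi) := by
    rw [inv_mul_eq_div, Real.div_sqrt]
  exact_mod_cast h

lemma pOp_Vgen : pOp Vgen = ((√(2 * Real.pi) : ℝ) * Complex.I : ℂ) • Vgen := by
  funext v
  simp only [pOp, Vgen, Pi.smul_apply, smul_eq_mul,
    (hasDerivAt_cexp_const_mul_ofReal (2 * Real.pi * Complex.I) v.1).deriv]
  generalize Complex.exp _ = E
  linear_combination (Complex.I * E) * sqrt_two_pi_inv_mul_two_pi

lemma qOp_Ugen : qOp Ugen = ((√(2 * Real.pi) : ℝ) : ℂ) • Ugen := by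
  funext v
  simp only [qOp, Ugen, Pi.smul_apply, smul_eq_mul, deriv_const, mul_zero, add_zero,
    (hasDerivAt_cexp_const_mul_ofReal (2 * Real.pi * Complex.I) v.2.1).deriv]
  generalize Complex.exp _ = E
  linear_combination E * sqrt_two_pi_inv_mul_two_pi -
    (((√(2 * Real.pi) : ℝ) : ℂ)⁻¹ * E * (2 * Real.pi)) * Complex.I_sq

/-- `U ∗_θ V = e^{2πiθ} V ∗_θ U` as formal power series in `θ ∈ ℏℂ[[ℏ]]`. -/
theorem stmt6 (θ : PowerSeries ℂ) (hθ : PowerSeries.constantCoeff θ = 0) :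
    star6 θ Ugen Vgen =
      PowerSeries.map (algebraMap ℂ Fn3)
        (cexpSeries ((2 * Real.pi * Complex.I : ℂ) • θ)) * star6 θ Vgen Ugen := by
  have h2πi : ((√(2 * Real.pi) : ℝ) * Complex.I : ℂ) * ((√(2 * Real.pi) : ℝ) : ℂ) =
      2 * Real.pi * Complex.I := by
    rw [mul_right_comm, ← Complex.ofReal_mul, Real.mul_self_sqrt (by positivity)]
    push_cast; ring
  rw [star6_eq_of_eq_smul pOp_Ugen qOp_Vgen, star6_eq_of_eq_smul pOp_Vgen qOp_Ugen, h2πi,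
    ← mul_assoc, ← map_mul, cexpSeries_smul_mul_cexpSeries_smul hθ, add_neg_cancel, mul_zero,
    neg_zero, mul_comm Vgen]
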